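/- Let p ≥ 1 and δ ≥ 0 with p + 2δ > 1. Then: (1) sup_{m≥1} Σ_{n=1}^∞ 1/(⟨m−n⟩^p·max{m,n}^{2δ}) ≤ 2 + 1/(p+2δ−1) + ζ(p+2δ). (2) Consequently, if A is a family of bounded operators A_{m,n} : Ran P_n → Ran P_m with N := sup_{m,n} ⟨m−n⟩^p max{m,n}^{2δ}‖A_{m,n}‖ < ∞, then the blocks define a bounded operator A on ℋ (with P_m A P_n = A_{m,n} for all m,n) whose operator norm satisfies ‖A‖ ≤ (2 + 1/(p+2δ−1) + ζ(p+2δ))·N. -/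

import Mathlib

noncomputable section

open ContinuousLinearMap

variable {𝓗 : Type*} [NormedAddCommGroup 𝓗] [InnerProductSpace ℂ 𝓗] [CompleteSpace 𝓗]

/-- `⟨x⟩ := max {1, |x|}`. -/
def jap (x : ℝ) : ℝ := max 1 |x|

/-- `(Pₙ)_{n≥1}` is a family of mutually orthogonal nonzero orthogonal projections
with `Σₙ Pₙ = I` in the strong sense. -/
def ProjFamily (P : ℕ+ → 𝓗 →L[ℂ] 𝓗) : Prop :=
  (∀ n, IsSelfAdjoint (P n)) ∧ (∀ n, (P n).comp (P n) = P n) ∧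
  (∀ m n, m ≠ n → (P m).comp (P n) = 0) ∧ (∀ n, P n ≠ 0) ∧
  (∀ ψ : 𝓗, HasSum (fun n => P n ψ) ψ)

/-- The quantity `⟨m-n⟩^p · max{m,n}^(2δ) · ‖Pₘ A Pₙ‖`; the norm `‖A‖_{p,δ}` is its
supremum over `m, n ≥ 1`. -/
def wnorm (P : ℕ+ → 𝓗 →L[ℂ] 𝓗) (p δ : ℝ) (A : 𝓗 →L[ℂ] 𝓗) (m n : ℕ+) : ℝ :=
  jap (((m : ℕ) : ℝ) - ((n : ℕ) : ℝ)) ^ p * (((max m n : ℕ+) : ℕ) : ℝ) ^ (2 * δ) *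
    ‖(P m).comp (A.comp (P n))‖

/-- `A` is diagonal with respect to the family `P`. -/
def IsDiag (P : ℕ+ → 𝓗 →L[ℂ] 𝓗) (A : 𝓗 →L[ℂ] 𝓗) : Prop :=
  ∀ m n, m ≠ n → (P m).comp (A.comp (P n)) = 0

/-- `Dom(H) = {ψ : Σₙ Eₙ²‖Pₙψ‖² < ∞}`. -/
def HDom (P : ℕ+ → 𝓗 →L[ℂ] 𝓗) (E : ℕ+ → ℝ) : Set 𝓗 :=
  {ψ | Summable fun n => (E n) ^ 2 * ‖P n ψ‖ ^ 2}

/-- The form domain `Q_H = {ψ : Σₙ Eₙ‖Pₙψ‖² < ∞}`. -/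
def QDom (P : ℕ+ → 𝓗 →L[ℂ] 𝓗) (E : ℕ+ → ℝ) : Set 𝓗 :=
  {ψ | Summable fun n => E n * ‖P n ψ‖ ^ 2}

/-- `h = Hψ`, i.e. `h = Σₙ Eₙ Pₙ ψ`. -/
def IsHSum (P : ℕ+ → 𝓗 →L[ℂ] 𝓗) (E : ℕ+ → ℝ) (ψ h : 𝓗) : Prop :=
  HasSum (fun n => (E n : ℂ) • P n ψ) h

/-- `U` is unitary. -/
def IsUnitaryOp (U : 𝓗 →L[ℂ] 𝓗) : Prop := U * star U = 1 ∧ star U * U = 1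

/-- A family of bounded operators which is `C¹` in the strong sense. -/
def StrongC1 (V : ℝ → 𝓗 →L[ℂ] 𝓗) : Prop := ∀ ψ : 𝓗, ContDiff ℝ 1 fun t => V t ψ

/-- `U(t,s)` is a propagator for `H + V(t)`. -/
def IsPropagator (P : ℕ+ → 𝓗 →L[ℂ] 𝓗) (E : ℕ+ → ℝ) (V : ℝ → 𝓗 →L[ℂ] 𝓗)
    (U : ℝ → ℝ → 𝓗 →L[ℂ] 𝓗) : Prop :=
  (∀ t s, IsUnitaryOp (U t s)) ∧
  (∀ ψ : 𝓗, Continuous fun ts : ℝ × ℝ => U ts.1 ts.2 ψ) ∧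
  (∀ t, U t t = 1) ∧
  (∀ t s r, (U t s).comp (U s r) = U t r) ∧
  (∀ t s, ⇑(U t s) '' HDom P E = HDom P E) ∧
  (∀ s : ℝ, ∀ ψ ∈ HDom P E, ∀ t : ℝ, ∃ d : 𝓗,
    HasDerivAt (fun τ => U τ s ψ) d t ∧
    ∀ h : 𝓗, IsHSum P E (U t s ψ) h → Complex.I • d = h + V t (U t s ψ))

/-- The Riemann zeta function `ζ(s) = Σ_{n≥1} n^{-s}` (for real `s > 1`). -/
def rzeta (s : ℝ) : ℝ := ∑' n : ℕ+, (((n : ℕ) : ℝ) ^ s)⁻¹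

/-- The constant `C_p = 2^(p+1) (1 + 2 ζ(p-1))`. -/
def Cconst (p : ℝ) : ℝ := 2 ^ (p + 1) * (1 + 2 * rzeta (p - 1))

/-!
Since `⟨m - n⟩ ≤ max {m, n}`, the weight `⟨m - n⟩^p max {m, n}^{2δ}` dominates `⟨m - n⟩^{p+2δ}`;
hence each row sum of inverse weights is at most `Σ_{k ∈ ℤ} ⟨k⟩^{-(p+2δ)} = 1 + 2ζ(p+2δ)`, and
`ζ(s) ≤ 1 + 1/(s-1)` by the integral test. The weight is symmetric, so the norms `‖A_{m,n}‖` have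
row and column sums at most `K N`, `K` the constant of (1), and the Schur test bounds the operator:
the row operators `Rₘ = Σₙ A_{m,n}` map into the mutually orthogonal ranges `Ran Pₘ`, so
`‖Σₘ Rₘ x‖² = Σₘ ‖Rₘ x‖²`, which Cauchy–Schwarz in each row and Bessel's inequality
`Σₙ ‖Pₙ x‖² ≤ ‖x‖²` bound by `(K N ‖x‖)²`.
-/

open scoped InnerProductSpace

section Weights

theorem one_le_jap (x : ℝ) : 1 ≤ jap x := le_max_left _ _

theorem jap_pos (x : ℝ) : 0 < jap x := one_pos.trans_le (one_le_jap x)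

theorem jap_neg (x : ℝ) : jap (-x) = jap x := by rw [jap, jap, abs_neg]

theorem jap_natCast (n : ℕ+) : jap ((n : ℕ) : ℝ) = (n : ℕ) := by
  rw [jap, Nat.abs_cast, max_eq_right (Nat.one_le_cast.2 n.pos)]

theorem jap_sub_le_max (m n : ℕ+) :
    jap (((m : ℕ) : ℝ) - ((n : ℕ) : ℝ)) ≤ (((max m n : ℕ+) : ℕ) : ℝ) := by
  rw [Monotone.map_max (f := fun k : ℕ+ => ((k : ℕ) : ℝ)) fun _ _ h => Nat.cast_le.2 h]
  exact max_le (le_max_of_le_left (Nat.one_le_cast.2 m.pos))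
    (abs_sub_le_of_nonneg_of_le (by positivity) (le_max_left _ _) (by positivity)
      (le_max_right _ _))

theorem hasSum_jap_rpow_inv {s : ℝ} (hs : 1 < s) :
    HasSum (fun k : ℤ => (jap k ^ s)⁻¹) (1 + 2 * rzeta s) := by
  have hpnat : ∀ n : ℕ+, (jap ((((n : ℕ) : ℤ)) : ℝ) ^ s)⁻¹ = (((n : ℕ) : ℝ) ^ s)⁻¹ := fun n => by
    rw [Int.cast_natCast, jap_natCast]
  have hnat : Summable fun n : ℕ => (jap ((n : ℤ) : ℝ) ^ s)⁻¹ := by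
    rw [← summable_pnat_iff_summable_nat]
    simpa only [hpnat] using summable_pnat_iff_summable_nat.2 (Real.summable_nat_rpow_inv.2 hs)
  have hsum : Summable fun k : ℤ => (jap k ^ s)⁻¹ :=
    Summable.of_nat_of_neg hnat (by simpa only [Int.cast_neg, jap_neg] using hnat)
  rw [hsum.hasSum_iff,
    tsum_int_eq_zero_add_two_mul_tsum_pnat (fun k => by simp only [Int.cast_neg, jap_neg]) hsum]
  simp only [hpnat]
  simp [rzeta, jap]

theorem rzeta_le {s : ℝ} (hs : 1 < s) : rzeta s ≤ 1 + 1 / (s - 1) := by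
  have hanti : AntitoneOn (fun x : ℝ => x ^ (-s)) (Set.Ici ((1 : ℕ) : ℝ)) :=
    (Real.antitoneOn_rpow_Ioi_of_exponent_nonpos (by linarith)).mono
      (Set.Ici_subset_Ioi.2 (by norm_num))
  have htail : ∑' n : ℕ, (((n + 1 + 1 : ℕ) : ℝ) ^ (-s)) ≤ 1 / (s - 1) := by
    refine (hanti.tsum_comp_add_le_integral 1 ?_ fun t ht => ?_).trans_eq ?_
    · simpa using integrableOn_Ioi_rpow_of_lt (by linarith : -s < -1) one_pos
    · exact Real.rpow_nonneg (zero_le_one.trans (le_of_lt (by simpa using ht))) _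
    · rw [Nat.cast_one, integral_Ioi_rpow_of_lt (by linarith) one_pos, Real.one_rpow,
        ← neg_div_neg_eq]
      ring_nf
  have hsucc : Summable fun n : ℕ => (((n + 1 : ℕ) : ℝ) ^ s)⁻¹ :=
    (summable_nat_add_iff 1).2 (Real.summable_nat_rpow_inv.2 hs)
  calc rzeta s = 1 + ∑' n : ℕ, (((n + 1 + 1 : ℕ) : ℝ) ^ (-s)) := by
        rw [rzeta, tsum_pnat_eq_tsum_succ (f := fun n : ℕ => ((n : ℝ) ^ s)⁻¹),
          hsucc.tsum_eq_zero_add]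
        refine congrArg₂ (· + ·) (by simp) (tsum_congr fun n => ?_)
        rw [Real.rpow_neg (Nat.cast_nonneg _)]
    _ ≤ 1 + 1 / (s - 1) := by linarith

def blockWeight (p δ : ℝ) (m n : ℕ+) : ℝ :=
  jap (((m : ℕ) : ℝ) - ((n : ℕ) : ℝ)) ^ p * (((max m n : ℕ+) : ℕ) : ℝ) ^ (2 * δ)

theorem blockWeight_pos (p δ : ℝ) (m n : ℕ+) : 0 < blockWeight p δ m n :=
  mul_pos (Real.rpow_pos_of_pos (jap_pos _) _) (Real.rpow_pos_of_pos (by positivity) _)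

theorem blockWeight_comm (p δ : ℝ) (m n : ℕ+) : blockWeight p δ m n = blockWeight p δ n m := by
  rw [blockWeight, blockWeight, ← jap_neg, neg_sub, max_comm]

theorem jap_rpow_le_blockWeight {p δ : ℝ} (hδ : 0 ≤ δ) (m n : ℕ+) :
    jap (((m : ℕ) : ℝ) - ((n : ℕ) : ℝ)) ^ (p + 2 * δ) ≤ blockWeight p δ m n := by
  rw [blockWeight, Real.rpow_add (jap_pos _)]
  exact mul_le_mul_of_nonneg_left
    (Real.rpow_le_rpow (jap_pos _).le (jap_sub_le_max m n) (by linarith))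
    (Real.rpow_nonneg (jap_pos _).le _)

theorem summable_inv_blockWeight_and_tsum_le {p δ : ℝ} (hδ : 0 ≤ δ) (hpδ : 1 < p + 2 * δ)
    (m : ℕ+) :
    Summable (fun n => 1 / blockWeight p δ m n) ∧
      ∑' n, 1 / blockWeight p δ m n ≤ 1 + 2 * rzeta (p + 2 * δ) := by
  set F : ℤ → ℝ := fun k => (jap k ^ (p + 2 * δ))⁻¹
  have hF : HasSum F (1 + 2 * rzeta (p + 2 * δ)) := hasSum_jap_rpow_inv hpδ
  have hF0 : ∀ k, 0 ≤ F k := fun k => inv_nonneg.2 (Real.rpow_nonneg (jap_pos _).le _)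
  set g : ℕ+ → ℤ := fun n => (m : ℤ) - ((n : ℕ) : ℤ)
  have hg : Function.Injective g := fun a b h => PNat.coe_injective (by simpa [g] using h)
  have hle : ∀ n, 1 / blockWeight p δ m n ≤ F (g n) := fun n => by
    rw [one_div]
    refine inv_anti₀ (Real.rpow_pos_of_pos (jap_pos _) _) ?_
    simpa [g] using jap_rpow_le_blockWeight (p := p) hδ m n
  have hFg : Summable (F ∘ g) := hF.summable.comp_injective hg
  have hsum := hFg.of_nonneg_of_le (fun n => (one_div_pos.2 (blockWeight_pos p δ m n)).le) hle
  refine ⟨hsum, ?_⟩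
  calc ∑' n, 1 / blockWeight p δ m n ≤ ∑' n, F (g n) := hsum.tsum_le_tsum hle hFg
    _ ≤ ∑' k, F k := tsum_comp_le_tsum_of_inj hF.summable hF0 hg
    _ = 1 + 2 * rzeta (p + 2 * δ) := hF.tsum_eq

theorem summable_and_tsum_le_of_mul_le {ι : Type*} {w b : ι → ℝ} {K N : ℝ} (hN : 0 ≤ N)
    (hw : ∀ i, 0 < w i) (hb : ∀ i, 0 ≤ b i) (hwb : ∀ i, w i * b i ≤ N)
    (hwK : Summable (fun i => 1 / w i) ∧ ∑' i, 1 / w i ≤ K) :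
    Summable b ∧ ∑' i, b i ≤ K * N := by
  have hle : ∀ i, b i ≤ N * (1 / w i) := fun i => by
    rw [mul_one_div, le_div_iff₀ (hw i), mul_comm]
    exact hwb i
  have hsum := (hwK.1.mul_left N).of_nonneg_of_le hb hle
  refine ⟨hsum, ?_⟩
  calc ∑' i, b i ≤ ∑' i, N * (1 / w i) := hsum.tsum_le_tsum hle (hwK.1.mul_left N)
    _ = N * ∑' i, 1 / w i := tsum_mul_left
    _ ≤ N * K := mul_le_mul_of_nonneg_left hwK.2 hN
    _ = K * N := mul_comm N K

end Weights

section SchurTest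

variable {ι κ : Type*}

theorem sq_tsum_le_tsum_mul_tsum {r f g : ι → ℝ} (hf : ∀ i, 0 ≤ f i) (hg : ∀ i, 0 ≤ g i)
    (hfs : Summable f) (hgs : Summable g) (hr : ∀ i, r i ^ 2 ≤ f i * g i) :
    Summable r ∧ (∑' i, r i) ^ 2 ≤ (∑' i, f i) * ∑' i, g i := by
  have hrs : Summable r := by
    refine ((hfs.add hgs).div_const 2).of_norm_bounded fun i => ?_
    have := two_mul_le_add_of_sq_le_mul (hf i) (hg i) ((sq_abs (r i)).trans_le (hr i))
    rw [Real.norm_eq_abs]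
    linarith
  refine ⟨hrs, le_of_tendsto' (hrs.hasSum.pow 2) fun s => ?_⟩
  calc (∑ i ∈ s, r i) ^ 2 ≤ (∑ i ∈ s, f i) * ∑ i ∈ s, g i :=
        Finset.sum_sq_le_sum_mul_sum_of_sq_le_mul s (fun i _ => hf i) (fun i _ => hg i)
          fun i _ => hr i
    _ ≤ (∑' i, f i) * ∑' i, g i :=
        mul_le_mul (hfs.sum_le_tsum s fun i _ => hf i) (hgs.sum_le_tsum s fun i _ => hg i)
          (Finset.sum_nonneg fun i _ => hg i) (tsum_nonneg hf)

theorem schur_test {a : ι → κ → ℝ} {x : κ → ℝ} {C : ℝ} (hC : 0 ≤ C) (ha : ∀ m n, 0 ≤ a m n)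
    (hrow : ∀ m, Summable (a m)) (hrowC : ∀ m, ∑' n, a m n ≤ C)
    (hcol : ∀ n, Summable fun m => a m n) (hcolC : ∀ n, ∑' m, a m n ≤ C)
    (hx : Summable fun n => x n ^ 2) :
    Summable (fun m => (∑' n, a m n * x n) ^ 2) ∧
      ∑' m, (∑' n, a m n * x n) ^ 2 ≤ C ^ 2 * ∑' n, x n ^ 2 := by
  have ha_le : ∀ m n, a m n ≤ C := fun m n =>
    ((hcol n).le_tsum m fun k _ => ha k n).trans (hcolC n)
  have hax_nonneg : ∀ m n, 0 ≤ a m n * x n ^ 2 := fun m n => mul_nonneg (ha m n) (sq_nonneg _)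
  have hax : ∀ m, Summable fun n => a m n * x n ^ 2 := fun m =>
    (hx.mul_left C).of_nonneg_of_le (hax_nonneg m) fun n =>
      mul_le_mul_of_nonneg_right (ha_le m n) (sq_nonneg _)
  set t : ι → ℝ := fun m => ∑' n, a m n * x n ^ 2
  have hrow_sq : ∀ m, (∑' n, a m n * x n) ^ 2 ≤ C * t m := fun m =>
    (sq_tsum_le_tsum_mul_tsum (ha m) (hax_nonneg m) (hrow m) (hax m)
      fun n => le_of_eq (by ring)).2.trans
      (mul_le_mul_of_nonneg_right (hrowC m) (tsum_nonneg (hax_nonneg m)))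
  have ht_sum_le : ∀ s : Finset ι, ∑ m ∈ s, t m ≤ C * ∑' n, x n ^ 2 := fun s => by
    rw [← Summable.tsum_finsetSum fun m _ => hax m, ← tsum_mul_left]
    refine Summable.tsum_le_tsum (fun n => ?_) (summable_sum fun m _ => hax m) (hx.mul_left C)
    rw [← Finset.sum_mul]
    exact mul_le_mul_of_nonneg_right
      (((hcol n).sum_le_tsum s fun m _ => ha m n).trans (hcolC n)) (sq_nonneg _)
  have ht : Summable t := summable_of_sum_le (fun m => tsum_nonneg (hax_nonneg m)) ht_sum_le
  have hsq : Summable fun m => (∑' n, a m n * x n) ^ 2 :=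
    (ht.mul_left C).of_nonneg_of_le (fun m => sq_nonneg _) hrow_sq
  refine ⟨hsq, ?_⟩
  calc ∑' m, (∑' n, a m n * x n) ^ 2 ≤ ∑' m, C * t m := hsq.tsum_le_tsum hrow_sq (ht.mul_left C)
    _ = C * ∑' m, t m := tsum_mul_left
    _ ≤ C * (C * ∑' n, x n ^ 2) :=
        mul_le_mul_of_nonneg_left (ht.tsum_le_of_sum_le ht_sum_le) hC
    _ = C ^ 2 * ∑' n, x n ^ 2 := by ring

end SchurTest

theorem ContinuousLinearMap.exists_apply_eq_tsum_of_norm_tsum_le {ι 𝕜 E F : Type*}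
    [NontriviallyNormedField 𝕜] [NormedAddCommGroup E] [NormedSpace 𝕜 E] [NormedAddCommGroup F]
    [NormedSpace 𝕜 F] {R : ι → E →L[𝕜] F} {C : ℝ} (hC : 0 ≤ C) (hs : ∀ x, Summable fun i => R i x)
    (hle : ∀ x, ‖∑' i, R i x‖ ≤ C * ‖x‖) :
    ∃ A : E →L[𝕜] F, (∀ x, A x = ∑' i, R i x) ∧ ‖A‖ ≤ C := by
  let L : E →ₗ[𝕜] F := linearMapOfTendsto (fun x => ∑' i, R i x)
    (fun s : Finset ι => ((∑ i ∈ s, R i : E →L[𝕜] F) : E →ₗ[𝕜] F))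
    (tendsto_pi_nhds.2 fun x => by simpa [HasSum] using (hs x).hasSum)
  exact ⟨L.mkContinuous C hle, fun x => rfl, L.mkContinuous_norm_le hC hle⟩

section Projections

variable {ι 𝕜 E : Type*} [RCLike 𝕜] [NormedAddCommGroup E] [InnerProductSpace 𝕜 E]
  [CompleteSpace E]

theorem IsStarProjection.norm_apply_le {p : E →L[𝕜] E} (hp : IsStarProjection p) (x : E) :
    ‖p x‖ ≤ ‖x‖ :=
  (p.le_of_opNorm_le (IsStarProjection.norm_le p hp) x).trans_eq (one_mul _)

structure PairwiseOrthogonalProjections (P : ι → E →L[𝕜] E) : Prop where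
  isStarProjection : ∀ i, IsStarProjection (P i)
  mul_eq_zero : Pairwise fun i j => P i * P j = 0

namespace PairwiseOrthogonalProjections

variable {P : ι → E →L[𝕜] E} (hP : PairwiseOrthogonalProjections P)
include hP

theorem apply_apply_of_ne {i j : ι} (h : i ≠ j) (x : E) : P i (P j x) = 0 := by
  simpa using congr($(hP.mul_eq_zero h) x)

theorem orthogonalFamily :
    OrthogonalFamily 𝕜 (fun i => LinearMap.range (P i : E →ₗ[𝕜] E)) fun i =>
      (LinearMap.range (P i : E →ₗ[𝕜] E)).subtypeₗᵢ := by
  rintro i j hij ⟨_, x, rfl⟩ ⟨_, y, rfl⟩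
  change ⟪P i x, P j y⟫_𝕜 = 0
  rw [← ContinuousLinearMap.adjoint_inner_right, (hP.isStarProjection i).isSelfAdjoint.adjoint_eq,
    hP.apply_apply_of_ne hij, inner_zero_right]

theorem isStarProjection_sum (s : Finset ι) : IsStarProjection (∑ i ∈ s, P i) := by
  classical
  induction s using Finset.induction_on with
  | empty => simp [IsStarProjection.zero]
  | insert i s hi ih =>
    rw [Finset.sum_insert hi]
    refine (hP.isStarProjection i).add ih ?_
    rw [Finset.mul_sum]
    exact Finset.sum_eq_zero fun j hj => hP.mul_eq_zero (ne_of_mem_of_not_mem hj hi).symm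

theorem sum_norm_sq_apply_le (s : Finset ι) (x : E) : ∑ i ∈ s, ‖P i x‖ ^ 2 ≤ ‖x‖ ^ 2 := by
  have hpyth := hP.orthogonalFamily.norm_sum (fun i => ⟨P i x, x, rfl⟩) s
  change ‖∑ i ∈ s, P i x‖ ^ 2 = ∑ i ∈ s, ‖P i x‖ ^ 2 at hpyth
  have hsum : ∑ i ∈ s, P i x = (∑ i ∈ s, P i) x := by simp
  rw [← hpyth, hsum]
  gcongr
  exact (hP.isStarProjection_sum s).norm_apply_le x

theorem summable_norm_sq_apply (x : E) : Summable fun i => ‖P i x‖ ^ 2 :=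
  summable_of_sum_le (fun _ => sq_nonneg _) (hP.sum_norm_sq_apply_le · x)

theorem tsum_norm_sq_apply_le (x : E) : ∑' i, ‖P i x‖ ^ 2 ≤ ‖x‖ ^ 2 :=
  (hP.summable_norm_sq_apply x).tsum_le_of_sum_le (hP.sum_norm_sq_apply_le · x)

theorem summable_and_norm_tsum_sq_eq {f : ι → E} (hf : ∀ i, P i (f i) = f i)
    (hsq : Summable fun i => ‖f i‖ ^ 2) :
    Summable f ∧ ‖∑' i, f i‖ ^ 2 = ∑' i, ‖f i‖ ^ 2 := by
  let l : ∀ i, LinearMap.range (P i : E →ₗ[𝕜] E) := fun i => ⟨f i, f i, hf i⟩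
  have hs : Summable f := (hP.orthogonalFamily.summable_iff_norm_sq_summable l).2 hsq
  have hpyth : (fun s : Finset ι => ‖∑ i ∈ s, f i‖ ^ 2) = fun s => ∑ i ∈ s, ‖f i‖ ^ 2 :=
    funext (hP.orthogonalFamily.norm_sum l)
  exact ⟨hs, tendsto_nhds_unique (hpyth ▸ hs.hasSum.norm.pow 2) hsq.hasSum⟩

theorem apply_tsum_of_apply_eq {f : ι → E} (hf : ∀ i, P i (f i) = f i) (hs : Summable f)
    (i : ι) : P i (∑' j, f j) = f i := by
  rw [(P i).map_tsum hs, tsum_eq_single i fun j hj => by rw [← hf j, hP.apply_apply_of_ne hj.symm]]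
  exact hf i

theorem tsum_mul_eq {b : ι → E →L[𝕜] E} (hb : Summable b) (hbP : ∀ i, b i * P i = b i)
    (n : ι) : (∑' i, b i) * P n = b n := by
  rw [← hb.tsum_mul_right, tsum_eq_single n fun i hi => by
    rw [← hbP i, mul_assoc, hP.mul_eq_zero hi, mul_zero], hbP n]

theorem norm_tsum_apply_le {b : ι → E →L[𝕜] E} (hb : Summable fun i => ‖b i‖)
    (hbP : ∀ i, b i * P i = b i) (x : E) : ‖(∑' i, b i) x‖ ≤ ∑' i, ‖b i‖ * ‖P i x‖ := by
  have hbx : ∀ i, ‖b i x‖ ≤ ‖b i‖ * ‖P i x‖ := fun i => by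
    rw [← congr($(hbP i) x)]
    exact (b i).le_opNorm (P i x)
  have hsum : Summable fun i => ‖b i‖ * ‖P i x‖ :=
    (hb.mul_right ‖x‖).of_nonneg_of_le (fun i => by positivity) fun i =>
      mul_le_mul_of_nonneg_left ((hP.isStarProjection i).norm_apply_le x) (norm_nonneg _)
  have hnorm : Summable fun i => ‖b i x‖ := hsum.of_nonneg_of_le (fun _ => norm_nonneg _) hbx
  calc ‖(∑' i, b i) x‖ = ‖∑' i, b i x‖ :=
        congrArg _ ((ContinuousLinearMap.apply 𝕜 E x).map_tsum hb.of_norm)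
    _ ≤ ∑' i, ‖b i x‖ := norm_tsum_le_tsum_norm hnorm
    _ ≤ ∑' i, ‖b i‖ * ‖P i x‖ := hnorm.tsum_le_tsum hbx hsum

section BlockMatrix

variable {B : ι → ι → E →L[𝕜] E} {C : ℝ} (hC : 0 ≤ C)
  (hrow : ∀ m, Summable fun n => ‖B m n‖) (hrowC : ∀ m, ∑' n, ‖B m n‖ ≤ C)
  (hcol : ∀ n, Summable fun m => ‖B m n‖) (hcolC : ∀ n, ∑' m, ‖B m n‖ ≤ C)
include hC hrow hrowC hcol hcolC

theorem summable_and_norm_tsum_tsum_apply_le (hPR : ∀ m, P m * ∑' n, B m n = ∑' n, B m n)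
    (hBP : ∀ m n, B m n * P n = B m n) (x : E) :
    Summable (fun m => (∑' n, B m n) x) ∧ ‖∑' m, (∑' n, B m n) x‖ ≤ C * ‖x‖ := by
  set R : ι → E →L[𝕜] E := fun m => ∑' n, B m n
  obtain ⟨hsq, hle⟩ := schur_test hC (fun m n => norm_nonneg (B m n)) hrow hrowC hcol hcolC
    (hP.summable_norm_sq_apply x)
  have hRx : ∀ m, ‖R m x‖ ^ 2 ≤ (∑' n, ‖B m n‖ * ‖P n x‖) ^ 2 := fun m =>
    pow_le_pow_left₀ (norm_nonneg _) (hP.norm_tsum_apply_le (hrow m) (hBP m) x) 2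
  have hRsq := hsq.of_nonneg_of_le (fun _ => sq_nonneg _) hRx
  obtain ⟨hs, hpyth⟩ := hP.summable_and_norm_tsum_sq_eq (fun m => congr($(hPR m) x)) hRsq
  refine ⟨hs, (pow_le_pow_iff_left₀ (norm_nonneg _) (by positivity) two_ne_zero).1 ?_⟩
  calc ‖∑' m, R m x‖ ^ 2 = ∑' m, ‖R m x‖ ^ 2 := hpyth
    _ ≤ ∑' m, (∑' n, ‖B m n‖ * ‖P n x‖) ^ 2 := hRsq.tsum_le_tsum hRx hsq
    _ ≤ C ^ 2 * ‖x‖ ^ 2 :=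
        hle.trans (mul_le_mul_of_nonneg_left (hP.tsum_norm_sq_apply_le x) (sq_nonneg C))
    _ = (C * ‖x‖) ^ 2 := by ring

theorem exists_blockOperator (hB : ∀ m n, P m * (B m n * P n) = B m n) :
    ∃ A : E →L[𝕜] E, (∀ m n, P m * (A * P n) = B m n) ∧ ‖A‖ ≤ C := by
  have hPB : ∀ m n, P m * B m n = B m n := fun m n => by
    rw [← hB, ← mul_assoc, (hP.isStarProjection m).isIdempotentElem.eq]
  have hBP : ∀ m n, B m n * P n = B m n := fun m n => by
    rw [← hB, mul_assoc, mul_assoc, (hP.isStarProjection n).isIdempotentElem.eq]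
  have hPR : ∀ m, P m * ∑' n, B m n = ∑' n, B m n := fun m => by
    rw [← (hrow m).of_norm.tsum_mul_left, tsum_congr (hPB m)]
  have hR := hP.summable_and_norm_tsum_tsum_apply_le hC hrow hrowC hcol hcolC hPR hBP
  obtain ⟨A, hA, hAC⟩ :=
    ContinuousLinearMap.exists_apply_eq_tsum_of_norm_tsum_le hC (hR · |>.1) (hR · |>.2)
  have hPA : ∀ m, P m * A = ∑' n, B m n := fun m => by
    ext x
    exact (congrArg (P m) (hA x)).trans
      (hP.apply_tsum_of_apply_eq (fun k => congr($(hPR k) x)) (hR x).1 m)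
  refine ⟨A, fun m n => ?_, hAC⟩
  rw [← mul_assoc, hPA, hP.tsum_mul_eq (hrow m).of_norm (hBP m) n]

end BlockMatrix

end PairwiseOrthogonalProjections

end Projections

theorem statement13_general
    (P : ℕ+ → 𝓗 →L[ℂ] 𝓗) (hP : ProjFamily P)
    (p δ : ℝ) (hδ : 0 ≤ δ) (hpδ : 1 < p + 2 * δ) :
    (∀ m : ℕ+,
      Summable (fun n : ℕ+ =>
        1 / (jap (((m : ℕ) : ℝ) - ((n : ℕ) : ℝ)) ^ p *
          (((max m n : ℕ+) : ℕ) : ℝ) ^ (2 * δ))) ∧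
      ∑' n : ℕ+,
          1 / (jap (((m : ℕ) : ℝ) - ((n : ℕ) : ℝ)) ^ p *
            (((max m n : ℕ+) : ℕ) : ℝ) ^ (2 * δ)) ≤
        2 + 1 / (p + 2 * δ - 1) + rzeta (p + 2 * δ)) ∧
    (∀ (B : ℕ+ → ℕ+ → 𝓗 →L[ℂ] 𝓗) (N : ℝ),
      (∀ m n : ℕ+, (P m).comp ((B m n).comp (P n)) = B m n) →
      (∀ m n : ℕ+,
        jap (((m : ℕ) : ℝ) - ((n : ℕ) : ℝ)) ^ p * (((max m n : ℕ+) : ℕ) : ℝ) ^ (2 * δ) *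
          ‖B m n‖ ≤ N) →
      ∃ A : 𝓗 →L[ℂ] 𝓗, (∀ m n : ℕ+, (P m).comp (A.comp (P n)) = B m n) ∧
        ‖A‖ ≤ (2 + 1 / (p + 2 * δ - 1) + rzeta (p + 2 * δ)) * N) := by
  obtain ⟨hsa, hid, horth, -, -⟩ := hP
  have hproj : PairwiseOrthogonalProjections P := ⟨fun n => ⟨hid n, hsa n⟩, horth⟩
  set K := 2 + 1 / (p + 2 * δ - 1) + rzeta (p + 2 * δ)
  have hrow : ∀ m, Summable (fun n => 1 / blockWeight p δ m n) ∧
      ∑' n, 1 / blockWeight p δ m n ≤ K := fun m => by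
    obtain ⟨hs, hle⟩ := summable_inv_blockWeight_and_tsum_le hδ hpδ m
    have : 0 < 1 / (p + 2 * δ - 1) := one_div_pos.2 (by linarith)
    exact ⟨hs, hle.trans (by linarith [rzeta_le hpδ])⟩
  refine ⟨hrow, fun B N hB hBN => ?_⟩
  have hN : 0 ≤ N := (mul_nonneg (blockWeight_pos p δ 1 1).le (norm_nonneg _)).trans (hBN 1 1)
  have hK : 0 ≤ K := (tsum_nonneg fun n => (one_div_pos.2 (blockWeight_pos p δ 1 n)).le).trans
    (hrow 1).2
  have hcol : ∀ n, Summable (fun m => 1 / blockWeight p δ m n) ∧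
      ∑' m, 1 / blockWeight p δ m n ≤ K := fun n => by
    simpa only [blockWeight_comm p δ _ n] using hrow n
  have hrowB m := summable_and_tsum_le_of_mul_le hN (blockWeight_pos p δ m)
    (fun n => norm_nonneg (B m n)) (hBN m) (hrow m)
  have hcolB n := summable_and_tsum_le_of_mul_le hN (blockWeight_pos p δ · n)
    (fun m => norm_nonneg (B m n)) (hBN · n) (hcol n)
  exact hproj.exists_blockOperator (mul_nonneg hK hN) (hrowB · |>.1) (hrowB · |>.2)
    (hcolB · |>.1) (hcolB · |>.2) hB

/-- Remark (iii) after Definition 2.1: the Schur–Holmgren bound for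
matrices with finite `‖·‖_{p,δ}` norm. -/
theorem statement13
    (P : ℕ+ → 𝓗 →L[ℂ] 𝓗) (hP : ProjFamily P)
    (p δ : ℝ) (hp : 1 ≤ p) (hδ : 0 ≤ δ) (hpδ : 1 < p + 2 * δ) :
    (∀ m : ℕ+,
      Summable (fun n : ℕ+ =>
        1 / (jap (((m : ℕ) : ℝ) - ((n : ℕ) : ℝ)) ^ p *
          (((max m n : ℕ+) : ℕ) : ℝ) ^ (2 * δ))) ∧
      ∑' n : ℕ+,
          1 / (jap (((m : ℕ) : ℝ) - ((n : ℕ) : ℝ)) ^ p *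
            (((max m n : ℕ+) : ℕ) : ℝ) ^ (2 * δ)) ≤
        2 + 1 / (p + 2 * δ - 1) + rzeta (p + 2 * δ)) ∧
    (∀ (B : ℕ+ → ℕ+ → 𝓗 →L[ℂ] 𝓗) (N : ℝ),
      (∀ m n : ℕ+, (P m).comp ((B m n).comp (P n)) = B m n) →
      (∀ m n : ℕ+,
        jap (((m : ℕ) : ℝ) - ((n : ℕ) : ℝ)) ^ p * (((max m n : ℕ+) : ℕ) : ℝ) ^ (2 * δ) *
          ‖B m n‖ ≤ N) →
      ∃ A : 𝓗 →L[ℂ] 𝓗, (∀ m n : ℕ+, (P m).comp (A.comp (P n)) = B m n) ∧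
        ‖A‖ ≤ (2 + 1 / (p + 2 * δ - 1) + rzeta (p + 2 * δ)) * N) :=
  statement13_general P hP p δ hδ hpδ

end
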